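/- arXiv:2111.14380 — 3 statements merged into one kernel-verified Lean document; each statement's English description precedes it below -/
import Mathlib

section
/- Let (Q,𝓗) be a knowledge space such that the associated pre-topological space (Q,τ_𝓗) (with τ_𝓗 = 𝓗) is regular. Then for each t ∈ Q and each H ∈ 𝓗 with t ∈ H, either Q \ H ∈ 𝓗, or H is not an atom at t, i.e., there exists L ∈ 𝓗 with t ∈ L and L ⊊ H. -/
/-- A knowledge space / pre-topology on a type `Q`. -/
def IsPreTop {Q : Type*} (T : Set (Set Q)) : Prop :=
  ⋃₀ T = Set.univ ∧ ∀ T' ⊆ T, ⋃₀ T' ∈ T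

/-- `T` is T₁. -/
def PreT1 {Q : Type*} (T : Set (Set Q)) : Prop :=
  ∀ y z : Q, y ≠ z → ∃ V ∈ T, ∃ W ∈ T, V ∩ {y, z} = {y} ∧ W ∩ {y, z} = {z}

/-- `T` is regular: T₁, and every point outside a closed set can be separated from it by
disjoint open sets. -/
def PreRegular {Q : Type*} (T : Set (Set Q)) : Prop :=
  PreT1 T ∧ ∀ (z : Q) (A : Set Q), Aᶜ ∈ T → z ∉ A →
    ∃ V ∈ T, ∃ O ∈ T, V ∩ O = ∅ ∧ z ∈ V ∧ A ⊆ O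

/-- in a regular knowledge space `(Q, 𝓗)`, for each `t ∈ Q` and each state
`H ∋ t`, either `Q \ H` is a state, or `H` is not an atom at `t` (there is a state `L`
with `t ∈ L ⊊ H`). -/
theorem stmt_7 {Q : Type*} (𝓗 : Set (Set Q)) (hKS : IsPreTop 𝓗)
    (hreg : PreRegular 𝓗) (t : Q) (H : Set Q) (hH : H ∈ 𝓗) (ht : t ∈ H) :
    Hᶜ ∈ 𝓗 ∨ ∃ L ∈ 𝓗, t ∈ L ∧ L ⊂ H := by
  obtain ⟨V, hV, O, hO, hdisj, htV, hsub⟩ :=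
    hreg.2 t Hᶜ (by simpa using hH) (by simpa using ht)
  have hVH : V ⊆ H := fun x hx => by
    by_contra hxH
    have : x ∈ V ∩ O := ⟨hx, hsub hxH⟩
    simp [hdisj] at this
  by_cases hVeq : V = H
  · left
    have hOH : O ⊆ Hᶜ := fun x hx hxH => by
      have : x ∈ V ∩ O := ⟨hVeq ▸ hxH, hx⟩
      simp [hdisj] at this
    have : O = Hᶜ := le_antisymm hOH hsub
    exact this ▸ hO
  · exact Or.inr ⟨V, hV, htV, lt_of_le_of_ne hVH hVeq⟩
end

section
/- Let (Q,𝓗) be a knowledge space, let H ∈ 𝓗 and t ∈ Q \ H. Then H ∪ {t} ∈ 𝓗 (i.e., t belongs to the outer fringe H^{O} of H) if and only if t is not an accumulation point of Q \ H in (Q,τ_𝓗), i.e., t ∉ (Q \ H)^{d}. -/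
/-- The derived set of `C` in the pre-topological space `(Q, τ_𝓗)`: the set of points `z`
such that every state containing `z` meets `C \ {z}`. -/
def pderived {Q : Type*} (𝓗 : Set (Set Q)) (C : Set Q) : Set Q :=
  {z | ∀ U ∈ 𝓗, z ∈ U → (U ∩ (C \ {z})).Nonempty}

/-- in a knowledge space `(Q, 𝓗)`, for `H ∈ 𝓗` and `t ∈ Q \ H`, one has
`H ∪ {t} ∈ 𝓗` iff `t` is not an accumulation point of `Q \ H`. -/
theorem stmt_12 {Q : Type*} (𝓗 : Set (Set Q)) (hKS : IsPreTop 𝓗)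
    (H : Set Q) (hH : H ∈ 𝓗) (t : Q) (ht : t ∉ H) :
    H ∪ {t} ∈ 𝓗 ↔ t ∉ pderived 𝓗 Hᶜ := by
  constructor
  · intro hmem hd
    obtain ⟨x, hxU, hxC, hxt⟩ := hd (H ∪ {t}) hmem (Or.inr rfl)
    rcases hxU with hxH | hxt'
    · exact hxC hxH
    · exact hxt hxt'
  · intro hnd
    simp only [pderived, Set.mem_setOf_eq, not_forall] at hnd
    obtain ⟨U, hU, htU, hne⟩ := hnd
    rw [Set.not_nonempty_iff_eq_empty] at hne
    have hUsub : U ⊆ H ∪ {t} := by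
      intro x hx
      by_cases hxH : x ∈ H
      · exact Or.inl hxH
      · by_cases hxt : x = t
        · exact Or.inr hxt
        · exfalso
          have hmem : x ∈ U ∩ (Hᶜ \ {t}) := ⟨hx, hxH, hxt⟩
          rw [hne] at hmem
          exact hmem
    have hunion : ⋃₀ {H, U} ∈ 𝓗 := hKS.2 _ (by
      intro S hS; rcases hS with rfl | rfl
      · exact hH
      · exact hU)
    have : ⋃₀ {H, U} = H ∪ {t} := by
      apply Set.Subset.antisymm
      · intro x hx
        obtain ⟨S, hS, hxS⟩ := hx
        rcases hS with rfl | rfl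
        · exact Or.inl hxS
        · exact hUsub hxS
      · intro x hx
        rcases hx with hxH | hxt
        · exact ⟨H, Or.inl rfl, hxH⟩
        · exact ⟨U, Or.inr rfl, hxt ▸ htU⟩
    rwa [this] at hunion
end

section
/- Let (Q,𝓗) be a knowledge space such that the associated pre-topological space (Q,τ_𝓗) is Hausdorff, and let D be a dense subset of (Q,τ_𝓗) such that the closure of H ∩ D equals the closure of H for every H ∈ 𝓗. Then |Q| ≤ 2^{2^{|D|}}. -/
universe u

/-- `T` is T₂ (Hausdorff). -/
def PreT2 {Q : Type*} (T : Set (Set Q)) : Prop :=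
  ∀ y z : Q, y ≠ z → ∃ V ∈ T, ∃ W ∈ T, y ∈ V ∧ z ∈ W ∧ V ∩ W = ∅

/-- The closure of `A`: the intersection of all closed sets (complements of states)
containing `A`. -/
def pclosure {Q : Type*} (𝓗 : Set (Set Q)) (A : Set Q) : Set Q :=
  ⋂₀ {C : Set Q | Cᶜ ∈ 𝓗 ∧ A ⊆ C}

/-- if `(Q, 𝓗)` is a knowledge space whose pre-topological space is
Hausdorff and `D` is a dense subset with `cl(H ∩ D) = cl(H)` for every state `H`, then
`|Q| ≤ 2^{2^{|D|}}`. -/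
theorem stmt_18 {Q : Type u} (𝓗 : Set (Set Q)) (hKS : IsPreTop 𝓗)
    (hT2 : PreT2 𝓗) (D : Set Q) (hD : pclosure 𝓗 D = Set.univ)
    (hHD : ∀ H ∈ 𝓗, pclosure 𝓗 (H ∩ D) = pclosure 𝓗 H) :
    Cardinal.mk Q ≤ (2 : Cardinal.{u}) ^ ((2 : Cardinal.{u}) ^ Cardinal.mk ↥D) := by
  classical
  set f : Q → Set (Set ↥D) :=
    fun q => {S | ∃ H ∈ 𝓗, q ∈ H ∧ S = (fun x : ↥D => (x : Q)) ⁻¹' H} with hf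
  have hinj : Function.Injective f := by
    intro y z hyz
    by_contra hne
    obtain ⟨V, hV, W, hW, hyV, hzW, hVW⟩ := hT2 y z hne
    have hmem : ((fun x : ↥D => (x : Q)) ⁻¹' V) ∈ f y := ⟨V, hV, hyV, rfl⟩
    rw [hyz] at hmem
    obtain ⟨H, hH, hzH, hHV⟩ := hmem
    -- H ∩ D = V ∩ D
    have htr : H ∩ D = V ∩ D := by
      ext x
      constructor
      · rintro ⟨hxH, hxD⟩
        have : (⟨x, hxD⟩ : ↥D) ∈ (fun x : ↥D => (x : Q)) ⁻¹' H := hxH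
        rw [← hHV] at this
        exact ⟨this, hxD⟩
      · rintro ⟨hxV, hxD⟩
        have : (⟨x, hxD⟩ : ↥D) ∈ (fun x : ↥D => (x : Q)) ⁻¹' V := hxV
        rw [hHV] at this
        exact ⟨this, hxD⟩
    have hcl : pclosure 𝓗 H = pclosure 𝓗 V := by
      rw [← hHD H hH, ← hHD V hV, htr]
    have hzcl : z ∈ pclosure 𝓗 H := fun C hC => hC.2 hzH
    rw [hcl] at hzcl
    have hWc : Wᶜ ∈ {C : Set Q | Cᶜ ∈ 𝓗 ∧ V ⊆ C} := by
      refine ⟨by simpa using hW, fun x hx hxW => ?_⟩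
      have : x ∈ V ∩ W := ⟨hx, hxW⟩
      rw [hVW] at this
      exact this
    exact hzcl Wᶜ hWc hzW
  calc Cardinal.mk Q ≤ Cardinal.mk (Set (Set ↥D)) := Cardinal.mk_le_of_injective hinj
    _ = (2 : Cardinal.{u}) ^ ((2 : Cardinal.{u}) ^ Cardinal.mk ↥D) := by
        simp [Cardinal.mk_set]
end
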